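/- For ordered rooted binary trees S and T with n internal nodes and e common edge pairs, n - e - 1 ≤ d_R(S,T) ≤ 2(n - e - 1); consequently the quantity n - e - 1 is a 2-approximation of the rotation distance: d_R(S,T) ≤ 2(n - e - 1) ≤ 2 d_R(S,T). -/

import Mathlib

/-!
A rotation replaces exactly one edge partition by another, so along a sequence of `d` rotations at
most `d` of the `n - 1` edge partitions of `S` are lost; since `e` of them survive in `T`, this gives
`n - 1 - e ≤ d_R(S, T)`.

The upper bound `d_R(S, T) ≤ 2 (n - 1 - e)` is proved by strong induction on `n`. If `S` and `T`
share no edge, both rotate into the right comb with at most `n - 1` rotations each. Otherwise a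
common edge spans the same leaf interval in both trees, so `S` and `T` arise by grafting trees `u`,
`u'` of the same size into the same leaf of trees `c`, `c'`. The common edges of `S` and `T` are
those of `c` and `c'`, those of `u` and `u'`, and the shared edge itself; transforming `u` into `u'`
and then `c` into `c'` gives the bound from the two induction hypotheses.
-/

inductive BT : Type
  | leaf : BT
  | node : BT → BT → BT
deriving DecidableEq

namespace BT

/-- number of internal nodes -/
def size : BT → ℕ
  | leaf => 0
  | node l r => size l + size r + 1

/-- number of leaves -/
def nl (t : BT) : ℕ := size t + 1

/-- one (right) rotation somewhere in the tree -/
inductive Rot : BT → BT → Prop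
  | root (a b c : BT) : Rot (node (node a b) c) (node a (node b c))
  | congrL {l l' : BT} (r : BT) : Rot l l' → Rot (node l r) (node l' r)
  | congrR (l : BT) {r r' : BT} : Rot r r' → Rot (node l r) (node l r')

/-- a rotation move: a right rotation or its inverse (a left rotation) -/
def Move (s t : BT) : Prop := Rot s t ∨ Rot t s

/-- `Chain n s t`: `s` is transformed into `t` by `n` rotation moves -/
inductive Chain : ℕ → BT → BT → Prop
  | refl (t : BT) : Chain 0 t t
  | step {n : ℕ} {s u t : BT} : Move s u → Chain n u t → Chain (n + 1) s t

/-- rotation distance -/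
noncomputable def dR (s t : BT) : ℕ := sInf {n | Chain n s t}

def isNode : BT → Bool
  | leaf => false
  | node _ _ => true

/-- the multiset of leaf partitions induced by internal edges, where the leaves of the
tree are numbered from `k` on, left to right; each internal edge is recorded by the
set of leaf numbers below it. -/
def iparts : BT → ℕ → Multiset (Finset ℕ)
  | leaf, _ => 0
  | node l r, k =>
      ((if isNode l then {Finset.Ico k (k + nl l)} else 0) + iparts l k)
        + ((if isNode r then {Finset.Ico (k + nl l) (k + nl l + nl r)} else 0)
            + iparts r (k + nl l))

/-- number of common edge pairs -/
def commonEdges (s t : BT) : ℕ := ((iparts s 0) ∩ (iparts t 0)).card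

end BT

namespace Finset

theorem Ico_eq_Ico_iff {α : Type*} [LinearOrder α] [LocallyFiniteOrder α] {a b c d : α}
    (h : a < b) : Ico a b = Ico c d ↔ a = c ∧ b = d := by
  rw [← coe_inj, coe_Ico, coe_Ico, Set.Ico_eq_Ico_iff (Or.inl h)]

end Finset

namespace Multiset

variable {α β : Type*} [DecidableEq α]

theorem add_inter_add_of_separated {A₁ A₂ B₁ B₂ : Multiset α} (p : α → Prop)
    (hA₁ : ∀ x ∈ A₁, p x) (hB₁ : ∀ x ∈ B₁, p x) (hA₂ : ∀ x ∈ A₂, ¬ p x)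
    (hB₂ : ∀ x ∈ B₂, ¬ p x) :
    (A₁ + A₂) ∩ (B₁ + B₂) = A₁ ∩ B₁ + A₂ ∩ B₂ := by
  ext x
  simp only [count_inter, count_add]
  by_cases hx : p x
  · rw [count_eq_zero.mpr fun h => hA₂ x h hx, count_eq_zero.mpr fun h => hB₂ x h hx]
    simp
  · rw [count_eq_zero.mpr fun h => hx (hA₁ x h), count_eq_zero.mpr fun h => hx (hB₁ x h)]
    simp

theorem count_map_of_injOn [DecidableEq β] {f : α → β} {s t : Multiset α} (hst : s ≤ t)
    (hf : Set.InjOn f {x | x ∈ t}) {x : α} (hx : x ∈ t) :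
    (s.map f).count (f x) = s.count x := by
  rw [count_map, count_eq_card_filter_eq]
  congr 1
  exact filter_congr fun a ha => ⟨fun h => hf hx (mem_of_le hst ha) h, congrArg f⟩

theorem map_inter_of_injOn [DecidableEq β] {f : α → β} {s t : Multiset α}
    (hf : Set.InjOn f {x | x ∈ s + t}) : (s ∩ t).map f = s.map f ∩ t.map f := by
  have hs : s ≤ s + t := le_add_right s t
  have hst : s ∩ t ≤ s + t := inter_le_left.trans hs
  ext y
  by_cases hy : ∃ x ∈ s + t, f x = y
  · obtain ⟨x, hx, rfl⟩ := hy
    rw [count_inter, count_map_of_injOn hst hf hx, count_map_of_injOn hs hf hx,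
      count_map_of_injOn (le_add_left t s) hf hx, count_inter]
  · have h0 : ∀ u ≤ s + t, (u.map f).count y = 0 := fun u hu =>
      count_eq_zero.mpr fun h => by
        obtain ⟨x, hx, rfl⟩ := mem_map.mp h
        exact hy ⟨x, mem_of_le hu hx, rfl⟩
    rw [count_inter, h0 _ hst, h0 s hs, zero_min]

end Multiset

namespace BT

theorem nl_node (l r : BT) : nl (node l r) = nl l + nl r := by
  simp only [nl, size]; omega

@[simp]
theorem isNode_node (l r : BT) : isNode (node l r) = true := rfl

theorem isNode_iff {t : BT} : isNode t = true ↔ 0 < size t := by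
  cases t <;> simp [isNode, size]

theorem isNode_or_eq_leaf (t : BT) : isNode t = true ∨ t = leaf := by
  cases t <;> simp

theorem eq_leaf_of_size_eq_zero {t : BT} (h : size t = 0) : t = leaf := by
  cases t <;> simp_all [size]

theorem Rot.size_eq {s t : BT} (h : Rot s t) : size s = size t := by
  induction h <;> simp only [size] <;> omega

theorem Rot.nl_eq {s t : BT} (h : Rot s t) : nl s = nl t := by
  rw [nl, nl, h.size_eq]

theorem Rot.isNode_left {s t : BT} (h : Rot s t) : isNode s = true := by
  cases h <;> rfl

theorem Rot.isNode_right {s t : BT} (h : Rot s t) : isNode t = true := by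
  cases h <;> rfl

theorem Move.symm {s t : BT} (h : Move s t) : Move t s := Or.symm h

theorem Move.congrL {l l' : BT} (r : BT) (h : Move l l') : Move (node l r) (node l' r) :=
  h.imp (Rot.congrL r) (Rot.congrL r)

theorem Move.congrR (l : BT) {r r' : BT} (h : Move r r') : Move (node l r) (node l r') :=
  h.imp (Rot.congrR l) (Rot.congrR l)

namespace Chain

variable {m k : ℕ} {s t u : BT}

theorem single (h : Move s t) : Chain 1 s t := step h (refl t)

theorem trans (h₁ : Chain m s u) (h₂ : Chain k u t) : Chain (m + k) s t := by
  induction h₁ with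
  | refl => simpa using h₂
  | step mv _ ih => simpa only [Nat.add_right_comm] using step mv (ih h₂)

theorem symm (h : Chain m s t) : Chain m t s := by
  induction h with
  | refl => exact refl _
  | step mv _ ih => exact ih.trans (single mv.symm)

theorem congrL {l l' : BT} (r : BT) (h : Chain m l l') : Chain m (node l r) (node l' r) := by
  induction h with
  | refl => exact refl _
  | step mv _ ih => exact step (mv.congrL r) ih

theorem congrR (l : BT) {r r' : BT} (h : Chain m r r') : Chain m (node l r) (node l r') := by
  induction h with
  | refl => exact refl _
  | step mv _ ih => exact step (mv.congrR l) ih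

end Chain

theorem dR_le {k : ℕ} {s t : BT} (h : Chain k s t) : dR s t ≤ k := Nat.sInf_le h

theorem chain_dR {k : ℕ} {s t : BT} (h : Chain k s t) : Chain (dR s t) s t :=
  Nat.sInf_mem (s := {n | Chain n s t}) ⟨k, h⟩

def rcomb : ℕ → BT
  | 0 => leaf
  | n + 1 => node leaf (rcomb n)

theorem chain_node_rcomb (l : BT) (m : ℕ) :
    Chain (size l) (node l (rcomb m)) (rcomb (size l + m + 1)) := by
  induction l generalizing m with
  | leaf => simpa [size, rcomb] using Chain.refl (rcomb (m + 1))
  | node a b iha ihb =>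
    have hrot : Move (node (node a b) (rcomb m)) (node a (node b (rcomb m))) :=
      Or.inl (Rot.root a b (rcomb m))
    have h := (Chain.single hrot).trans ((Chain.congrR a (ihb m)).trans (iha (size b + m + 1)))
    rwa [show 1 + (size b + size a) = size (node a b) by simp only [size]; omega,
      show size a + (size b + m + 1) + 1 = size (node a b) + m + 1 by simp only [size]; omega] at h

theorem exists_chain_rcomb (t : BT) : ∃ k ≤ size t - 1, Chain k t (rcomb (size t)) := by
  induction t with
  | leaf => exact ⟨0, le_rfl, Chain.refl _⟩
  | node l r _ ihr =>
    obtain ⟨k, hk, hc⟩ := ihr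
    refine ⟨k + size l, by simp only [size]; omega, ?_⟩
    have h := (hc.congrR l).trans (chain_node_rcomb l (size r))
    rwa [show size l + size r + 1 = size (node l r) from rfl] at h

theorem exists_chain_of_size_eq {s t : BT} (h : size s = size t) :
    ∃ k ≤ 2 * (size s - 1), Chain k s t := by
  obtain ⟨k, hk, hs⟩ := exists_chain_rcomb s
  obtain ⟨k', hk', ht⟩ := exists_chain_rcomb t
  rw [← h] at ht hk'
  exact ⟨k + k', by omega, hs.trans ht.symm⟩

theorem chain_dR_of_size_eq {s t : BT} (h : size s = size t) : Chain (dR s t) s t :=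
  let ⟨_, _, hc⟩ := exists_chain_of_size_eq h
  chain_dR hc

theorem Rot.exists_iparts_eq {s t : BT} (h : Rot s t) (k : ℕ) :
    ∃ A B M, iparts s k = A ::ₘ M ∧ iparts t k = B ::ₘ M := by
  induction h generalizing k with
  | root a b c =>
    refine ⟨Finset.Ico k (k + nl a + nl b), Finset.Ico (k + nl a) (k + nl a + nl b + nl c),
      (if isNode a then {Finset.Ico k (k + nl a)} else 0) + iparts a k +
        ((if isNode b then {Finset.Ico (k + nl a) (k + nl a + nl b)} else 0) +
          iparts b (k + nl a)) +
        ((if isNode c then {Finset.Ico (k + nl a + nl b) (k + nl a + nl b + nl c)} else 0) +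
          iparts c (k + nl a + nl b)), ?_, ?_⟩ <;>
    simp only [iparts, isNode_node, if_true, nl_node, ← Nat.add_assoc,
      ← Multiset.singleton_add] <;> abel
  | @congrL l l' r hr ih =>
    obtain ⟨A, B, M, h₁, h₂⟩ := ih k
    refine ⟨A, B, Finset.Ico k (k + nl l) ::ₘ M +
      ((if isNode r then {Finset.Ico (k + nl l) (k + nl l + nl r)} else 0) +
        iparts r (k + nl l)), ?_, ?_⟩ <;>
    simp only [iparts, hr.isNode_left, hr.isNode_right, if_true, h₁, h₂, hr.nl_eq,
      ← Multiset.singleton_add] <;> abel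
  | @congrR l r r' hr ih =>
    obtain ⟨A, B, M, h₁, h₂⟩ := ih (k + nl l)
    refine ⟨A, B, (if isNode l then {Finset.Ico k (k + nl l)} else 0) + iparts l k +
      Finset.Ico (k + nl l) (k + nl l + nl r) ::ₘ M, ?_, ?_⟩ <;>
    simp only [iparts, hr.isNode_left, hr.isNode_right, if_true, h₁, h₂, hr.nl_eq,
      ← Multiset.singleton_add] <;> abel

theorem Move.card_iparts_sub_le {s t : BT} (h : Move s t) (k : ℕ) :
    (iparts s k - iparts t k).card ≤ 1 := by
  obtain ⟨A, B, M, hs, ht⟩ : ∃ A B M, iparts s k = A ::ₘ M ∧ iparts t k = B ::ₘ M := by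
    rcases h with h | h
    · exact h.exists_iparts_eq k
    · obtain ⟨A, B, M, h₁, h₂⟩ := h.exists_iparts_eq k
      exact ⟨B, A, M, h₂, h₁⟩
  have hle : A ::ₘ M - B ::ₘ M ≤ {A} := by
    rw [tsub_le_iff_right, Multiset.singleton_add]
    exact Multiset.cons_le_cons A (Multiset.le_cons_self M B)
  simpa [hs, ht] using Multiset.card_le_card hle

theorem Chain.card_iparts_sub_le {m : ℕ} {s t : BT} (h : Chain m s t) (k : ℕ) :
    (iparts s k - iparts t k).card ≤ m := by
  induction h with
  | refl => simp
  | @step m s u t mv _ ih =>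
    calc (iparts s k - iparts t k).card
        ≤ (iparts s k - iparts u k + (iparts u k - iparts t k)).card :=
          Multiset.card_le_card tsub_le_tsub_add_tsub
      _ ≤ m + 1 := by rw [Multiset.card_add]; linarith [mv.card_iparts_sub_le k]

theorem card_iparts (t : BT) (k : ℕ) : (iparts t k).card = size t - 1 := by
  induction t generalizing k with
  | leaf => rfl
  | node l r ihl ihr =>
    have hite : ∀ t : BT, (if isNode t then 1 else 0) + (size t - 1) = size t := by
      intro t
      cases t <;> simp only [isNode, size, Bool.false_eq_true, if_true, if_false]
      omega
    have := hite l
    have := hite r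
    simp only [iparts, Multiset.card_add, apply_ite Multiset.card, Multiset.card_singleton,
      Multiset.card_zero, ihl, ihr, size]
    omega

theorem sub_commonEdges_le_dR {s t : BT} (h : size s = size t) :
    size s - 1 - commonEdges s t ≤ dR s t := by
  have hsplit := congrArg Multiset.card (Multiset.sub_add_inter (iparts s 0) (iparts t 0))
  rw [Multiset.card_add, card_iparts] at hsplit
  have := (chain_dR_of_size_eq h).card_iparts_sub_le 0
  rw [commonEdges]
  omega

theorem mem_iparts {t : BT} {k : ℕ} {J : Finset ℕ} (hJ : J ∈ iparts t k) :
    ∃ i j, J = Finset.Ico i j ∧ k ≤ i ∧ i + 2 ≤ j ∧ j ≤ k + nl t ∧ j + 1 ≤ i + nl t := by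
  induction t generalizing k with
  | leaf => simp [iparts] at hJ
  | node l r ihl ihr =>
    simp only [iparts, Multiset.mem_add] at hJ
    rw [nl_node]
    rcases hJ with (h | h) | (h | h)
    · obtain ⟨hl, rfl⟩ : isNode l = true ∧ J = Finset.Ico k (k + nl l) := by
        split_ifs at h <;> simp_all
      have := isNode_iff.mp hl
      exact ⟨_, _, rfl, le_rfl, by simp only [nl]; omega, by omega, by simp only [nl]; omega⟩
    · obtain ⟨i, j, rfl, h₁, h₂, h₃, h₄⟩ := ihl h
      exact ⟨i, j, rfl, h₁, h₂, by omega, by simp only [nl] at *; omega⟩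
    · obtain ⟨hr, rfl⟩ : isNode r = true ∧ J = Finset.Ico (k + nl l) (k + nl l + nl r) := by
        split_ifs at h <;> simp_all
      have := isNode_iff.mp hr
      exact ⟨_, _, rfl, by omega, by simp only [nl]; omega, by omega, by simp only [nl]; omega⟩
    · obtain ⟨i, j, rfl, h₁, h₂, h₃, h₄⟩ := ihr h
      exact ⟨i, j, rfl, by omega, h₂, by omega, by simp only [nl] at *; omega⟩

theorem iparts_add (t : BT) (m d : ℕ) :
    iparts t (m + d) = (iparts t m).map (Finset.image (· + d)) := by
  induction t generalizing m with
  | leaf => rfl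
  | node l r ihl ihr =>
    simp only [iparts, Multiset.map_add, apply_ite (Multiset.map (Finset.image (· + d))),
      Multiset.map_singleton, Multiset.map_zero, Finset.image_add_right_Ico, ← ihl, ← ihr,
      Nat.add_right_comm _ (nl r) d, Nat.add_right_comm m (nl l) d]

theorem card_iparts_inter_iparts (s t : BT) (k : ℕ) :
    (iparts s k ∩ iparts t k).card = commonEdges s t := by
  have hshift (t : BT) : iparts t k = (iparts t 0).map (Finset.image (· + k)) := by
    simpa using iparts_add t 0 k
  rw [hshift, hshift, ← Multiset.map_inter_of_injOn
    (Finset.image_injective (add_left_injective k)).injOn, Multiset.card_map, commonEdges]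

theorem ssubset_Ico_of_mem_iparts {t : BT} {k : ℕ} {I : Finset ℕ} (h : I ∈ iparts t k) :
    I ⊂ Finset.Ico k (k + nl t) := by
  obtain ⟨i, j, rfl, hi, hij, hj, hlt⟩ := mem_iparts h
  rw [Finset.ssubset_iff_subset_ne, Finset.Ico_subset_Ico_iff (by omega), Ne,
    Finset.Ico_eq_Ico_iff (by omega)]
  omega

/-- `iparts t k` together with the interval of the root of `t`; unlike `iparts`, it transforms
under `graft` without case distinctions. -/
def nodeIntervals (t : BT) (k : ℕ) : Multiset (Finset ℕ) :=
  (if isNode t then {Finset.Ico k (k + nl t)} else 0) + iparts t k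

theorem nodeIntervals_node (l r : BT) (k : ℕ) :
    nodeIntervals (node l r) k =
      {Finset.Ico k (k + nl l + nl r)} + (nodeIntervals l k + nodeIntervals r (k + nl l)) := by
  simp only [nodeIntervals, iparts, isNode_node, if_true, nl_node, Nat.add_assoc]

theorem mem_nodeIntervals {t : BT} {k : ℕ} {J : Finset ℕ} (hJ : J ∈ nodeIntervals t k) :
    ∃ i j, J = Finset.Ico i j ∧ k ≤ i ∧ i < j ∧ j ≤ k + nl t := by
  rcases Multiset.mem_add.mp hJ with h | h
  · obtain ⟨ht, rfl⟩ : isNode t = true ∧ J = Finset.Ico k (k + nl t) := by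
      split_ifs at h <;> simp_all
    exact ⟨_, _, rfl, le_rfl, by simp [nl], le_rfl⟩
  · obtain ⟨i, j, rfl, hi, hij, hj, -⟩ := mem_iparts h
    exact ⟨i, j, rfl, hi, by omega, hj⟩

theorem nodeIntervals_add (t : BT) (m d : ℕ) :
    nodeIntervals t (m + d) = (nodeIntervals t m).map (Finset.image (· + d)) := by
  simp only [nodeIntervals, iparts_add t m d, Multiset.map_add, apply_ite (Multiset.map _),
    Multiset.map_singleton, Multiset.map_zero, Finset.image_add_right_Ico, Nat.add_right_comm m]

theorem subset_Ico_of_mem_nodeIntervals {t : BT} {k : ℕ} {I : Finset ℕ}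
    (h : I ∈ nodeIntervals t k) : I ⊆ Finset.Ico k (k + nl t) := by
  obtain ⟨i, j, rfl, hi, hij, hj⟩ := mem_nodeIntervals h
  exact (Finset.Ico_subset_Ico_iff hij).mpr ⟨hi, hj⟩

/-- `graft c j u` replaces the leaf of `c` with index `j` by the tree `u`. -/
def graft : BT → ℕ → BT → BT
  | leaf, _, u => u
  | node l r, j, u => if j < nl l then node (graft l j u) r else node l (graft r (j - nl l) u)

theorem size_graft (c : BT) (j : ℕ) (u : BT) : size (graft c j u) = size c + size u := by
  induction c generalizing j with
  | leaf => simp [graft, size]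
  | node l r ihl ihr =>
    simp only [graft]
    split <;> simp only [size, ihl, ihr] <;> omega

theorem nl_graft (c : BT) (j : ℕ) (u : BT) : nl (graft c j u) = nl c + size u := by
  simp only [nl, size_graft]; omega

theorem isNode_graft {c : BT} (hc : isNode c = true) (j : ℕ) (u : BT) :
    isNode (graft c j u) = true := by
  rw [isNode_iff, size_graft]
  have := isNode_iff.mp hc
  omega

theorem Rot.graft {c c' : BT} (h : Rot c c') (j : ℕ) (u : BT) :
    Rot (graft c j u) (graft c' j u) := by
  induction h generalizing j with
  | root a b c =>
    simp only [BT.graft, nl_node]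
    split_ifs <;> first | omega | skip
    · exact Rot.root _ _ _
    · exact Rot.root _ _ _
    · rw [Nat.sub_add_eq]
      exact Rot.root _ _ _
  | congrL r hr ih =>
    simp only [BT.graft, hr.nl_eq]
    split
    · exact Rot.congrL r (ih j)
    · exact Rot.congrL _ hr
  | congrR l hr ih =>
    simp only [BT.graft]
    split
    · exact Rot.congrR _ hr
    · exact Rot.congrR l (ih _)

theorem Chain.graft_inner (c : BT) (j : ℕ) {m : ℕ} {u u' : BT} (h : Chain m u u') :
    Chain m (graft c j u) (graft c j u') := by
  induction c generalizing j with
  | leaf => simpa [graft] using h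
  | node l r ihl ihr =>
    simp only [graft]
    split
    · exact (ihl j).congrL r
    · exact (ihr _).congrR l

theorem Chain.graft_outer {m : ℕ} {c c' : BT} (h : Chain m c c') (j : ℕ) (u : BT) :
    Chain m (graft c j u) (graft c' j u) := by
  induction h with
  | refl => exact Chain.refl _
  | step mv _ ih => exact Chain.step (mv.imp (·.graft j u) (·.graft j u)) ih

def shiftAfter (p d x : ℕ) : ℕ := if x ≤ p then x else x + d

theorem shiftAfter_of_le {p x : ℕ} (d : ℕ) (h : x ≤ p) : shiftAfter p d x = x := if_pos h

theorem shiftAfter_of_lt {p x : ℕ} (d : ℕ) (h : p < x) : shiftAfter p d x = x + d :=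
  if_neg (Nat.not_le.mpr h)

theorem shiftAfter_strictMono (p d : ℕ) : StrictMono (shiftAfter p d) := by
  intro x y h
  simp only [shiftAfter]
  split_ifs <;> omega

/-- When the leaf `p` of a tree is replaced by a tree with `d + 1` leaves, the leaf interval
`Finset.Ico i j` of an edge becomes `widenAt p d (Finset.Ico i j)`. -/
noncomputable def widenAt (p d : ℕ) (I : Finset ℕ) : Finset ℕ :=
  if h : I.Nonempty then
    Finset.Ico (shiftAfter p d (I.min' h)) (shiftAfter p d (I.max' h + 1))
  else ∅

theorem widenAt_Ico (p d : ℕ) {i j : ℕ} (hij : i < j) :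
    widenAt p d (Finset.Ico i j) = Finset.Ico (shiftAfter p d i) (shiftAfter p d j) := by
  have hne : (Finset.Ico i j).Nonempty := Finset.nonempty_Ico.mpr hij
  have hmin : (Finset.Ico i j).min' hne = i :=
    le_antisymm (Finset.min'_le _ _ (by simpa using hij))
      (Finset.le_min' _ _ _ fun x hx => (Finset.mem_Ico.mp hx).1)
  have hmax : (Finset.Ico i j).max' hne + 1 = j :=
    le_antisymm
      (Nat.succ_le_of_lt <| (Finset.max'_lt_iff _ _).mpr fun x hx => (Finset.mem_Ico.mp hx).2)
      (Nat.le_succ_of_pred_le (Finset.le_max' _ _ (by simp; omega)))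
  rw [widenAt, dif_pos hne, hmin, hmax]

theorem Ico_eq_of_widenAt_eq {p d i j i' j' : ℕ} (hij : i < j) (hij' : i' < j')
    (h : widenAt p d (Finset.Ico i j) = widenAt p d (Finset.Ico i' j')) :
    Finset.Ico i j = Finset.Ico i' j' := by
  have hmono := shiftAfter_strictMono p d
  rw [widenAt_Ico p d hij, widenAt_Ico p d hij', Finset.Ico_eq_Ico_iff (hmono hij)] at h
  rw [hmono.injective h.1, hmono.injective h.2]

theorem map_widenAt_nodeIntervals_of_le {t : BT} {k p : ℕ} (d : ℕ) (h : k + nl t ≤ p) :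
    (nodeIntervals t k).map (widenAt p d) = nodeIntervals t k := by
  refine (Multiset.map_congr rfl fun J hJ => ?_).trans (Multiset.map_id _)
  obtain ⟨i, j, rfl, -, hij, hj⟩ := mem_nodeIntervals hJ
  rw [widenAt_Ico p d hij, shiftAfter_of_le d (by omega), shiftAfter_of_le d (by omega), id]

theorem map_widenAt_nodeIntervals_of_lt {t : BT} {k p : ℕ} (d : ℕ) (h : p < k) :
    (nodeIntervals t k).map (widenAt p d) = nodeIntervals t (k + d) := by
  rw [nodeIntervals_add t k d]
  refine Multiset.map_congr rfl fun J hJ => ?_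
  obtain ⟨i, j, rfl, hi, hij, -⟩ := mem_nodeIntervals hJ
  rw [widenAt_Ico p d hij, Finset.image_add_right_Ico, shiftAfter_of_lt d (by omega),
    shiftAfter_of_lt d (by omega)]

theorem nodeIntervals_graft {c : BT} {a : ℕ} (ha : a < nl c) (u : BT) (k : ℕ) :
    nodeIntervals (graft c a u) k =
      (nodeIntervals c k).map (widenAt (k + a) (size u)) + nodeIntervals u (k + a) := by
  induction c generalizing a k with
  | leaf =>
    obtain rfl : a = 0 := by simpa [nl, size] using ha
    simp [graft, show nodeIntervals leaf k = 0 from rfl]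
  | node l r ihl ihr =>
    have hl : 0 < nl l := Nat.succ_pos _
    rw [nl_node] at ha
    by_cases hal : a < nl l
    · simp only [graft, if_pos hal, nodeIntervals_node, nl_graft, ihl hal, Multiset.map_add,
        Multiset.map_singleton, widenAt_Ico _ _ (show k < k + nl l + nl r by omega),
        shiftAfter_of_le _ (show k ≤ k + a by omega),
        shiftAfter_of_lt _ (show k + a < k + nl l + nl r by omega),
        map_widenAt_nodeIntervals_of_lt (size u) (show k + a < k + nl l by omega),
        Nat.add_right_comm _ (nl r) (size u), Nat.add_right_comm k (nl l) (size u)]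
      abel_nf
    · simp only [graft, if_neg hal, nodeIntervals_node, nl_graft,
        ihr (show a - nl l < nl r by omega), Multiset.map_add, Multiset.map_singleton,
        widenAt_Ico _ _ (show k < k + nl l + nl r by omega),
        shiftAfter_of_le _ (show k ≤ k + a by omega),
        shiftAfter_of_lt _ (show k + a < k + nl l + nl r by omega),
        map_widenAt_nodeIntervals_of_le (size u) (show k + nl l ≤ k + a by omega),
        show k + nl l + (a - nl l) = k + a by omega, ← Nat.add_assoc]
      abel

theorem iparts_graft {c : BT} (hc : isNode c = true) {a : ℕ} (ha : a < nl c) (u : BT) (k : ℕ) :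
    iparts (graft c a u) k =
      (iparts c k).map (widenAt (k + a) (size u)) + nodeIntervals u (k + a) := by
  have h := nodeIntervals_graft ha u k
  rw [nodeIntervals, nodeIntervals, if_pos (isNode_graft hc a u), if_pos hc, Multiset.map_add,
    Multiset.map_singleton, widenAt_Ico _ _ (by simp [nl]),
    shiftAfter_of_le _ (show k ≤ k + a by omega),
    shiftAfter_of_lt _ (show k + a < k + nl c by omega), nl_graft, ← Nat.add_assoc] at h
  exact add_left_cancel (h.trans (add_assoc _ _ _))

theorem exists_graft_of_Ico_mem_iparts {t : BT} {k a b : ℕ} (h : Finset.Ico a b ∈ iparts t k) :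
    ∃ c u, isNode c = true ∧ isNode u = true ∧ a - k < nl c ∧ nl u = b - a ∧
      t = graft c (a - k) u := by
  induction t generalizing k with
  | leaf => simp [iparts] at h
  | node l r ihl ihr =>
    have hl : 0 < nl l := Nat.succ_pos _
    have hr : 0 < nl r := Nat.succ_pos _
    simp only [iparts, Multiset.mem_add] at h
    rcases h with (h | h) | (h | h)
    · obtain ⟨hl, h⟩ : isNode l = true ∧ Finset.Ico a b = Finset.Ico k (k + nl l) := by
        split_ifs at h <;> simp_all
      obtain ⟨rfl, rfl⟩ := (Finset.Ico_eq_Ico_iff (by omega)).mp h.symm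
      refine ⟨node leaf r, l, rfl, hl, by simp [nl_node]; omega, by omega, ?_⟩
      simp [graft, nl]
    · obtain ⟨c, u, -, hu, hc, hnl, rfl⟩ := ihl h
      refine ⟨node c r, u, rfl, hu, by rw [nl_node]; omega, hnl, ?_⟩
      simp [graft, hc]
    · obtain ⟨hr, h⟩ : isNode r = true ∧
          Finset.Ico a b = Finset.Ico (k + nl l) (k + nl l + nl r) := by
        split_ifs at h <;> simp_all
      obtain ⟨rfl, rfl⟩ := (Finset.Ico_eq_Ico_iff (by omega)).mp h.symm
      refine ⟨node l leaf, r, rfl, hr, by simp [nl, size], by omega, ?_⟩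
      simp [graft, nl]
    · have hka : k + nl l ≤ a := by
        obtain ⟨i, j, hij, hi, hij₂, -⟩ := mem_iparts h
        rwa [((Finset.Ico_eq_Ico_iff (by omega)).mp hij.symm).1] at hi
      obtain ⟨c, u, -, hu, hc, hnl, rfl⟩ := ihr h
      refine ⟨node l c, u, rfl, hu, by rw [nl_node]; omega, hnl, ?_⟩
      simp [graft, show ¬ a - k < nl l by omega, Nat.sub_sub, Nat.add_comm k]

theorem not_subset_of_mem_map_widenAt {t : BT} {k p d : ℕ} {I : Finset ℕ}
    (h : I ∈ (iparts t k).map (widenAt p d)) : ¬ I ⊆ Finset.Ico p (p + d + 1) := by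
  obtain ⟨J, hJ, rfl⟩ := Multiset.mem_map.mp h
  obtain ⟨i, j, rfl, -, hij, -, -⟩ := mem_iparts hJ
  rw [widenAt_Ico _ _ (by omega),
    Finset.Ico_subset_Ico_iff (shiftAfter_strictMono p d (by omega))]
  simp only [shiftAfter]
  split_ifs <;> omega

theorem card_nodeIntervals_inter {u u' : BT} (hu : isNode u = true) (hu' : isNode u' = true)
    (hnl : nl u' = nl u) (k : ℕ) :
    (nodeIntervals u k ∩ nodeIntervals u' k).card = 1 + commonEdges u u' := by
  set w := Finset.Ico k (k + nl u)
  have hinner {t : BT} (ht : nl t = nl u) {I : Finset ℕ} (h : I ∈ iparts t k) : ¬ ¬ I ⊂ w :=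
    not_not.mpr (by simpa [w, ht] using ssubset_Ico_of_mem_iparts h)
  have hw {I : Finset ℕ} (h : I ∈ ({w} : Multiset (Finset ℕ))) : ¬ I ⊂ w := by
    rw [Multiset.mem_singleton.mp h]
    exact ssubset_irrefl w
  rw [nodeIntervals, nodeIntervals, if_pos hu, if_pos hu', hnl,
    Multiset.add_inter_add_of_separated (fun I => ¬ I ⊂ w) (fun _ => hw) (fun _ => hw)
      (fun _ => hinner rfl) (fun _ => hinner hnl),
    Multiset.card_add, ← Multiset.inf_eq_inter {w}, inf_idem, Multiset.card_singleton,
    card_iparts_inter_iparts]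

theorem commonEdges_graft {c c' : BT} {a : ℕ} (hc : isNode c = true) (hc' : isNode c' = true)
    (ha : a < nl c) (ha' : a < nl c') {u u' : BT} (hsize : size u' = size u) :
    commonEdges (graft c a u) (graft c' a u') =
      commonEdges c c' + (nodeIntervals u a ∩ nodeIntervals u' a).card := by
  set w := Finset.Ico a (a + nl u)
  have hnot {t : BT} {I : Finset ℕ} (h : I ∈ (iparts t 0).map (widenAt a (size u))) :
      ¬ I ⊆ w := not_subset_of_mem_map_widenAt h
  have hsub {t : BT} (ht : size t = size u) {I : Finset ℕ} (h : I ∈ nodeIntervals t a) :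
      ¬ ¬ I ⊆ w := by
    simpa [w, nl, ht] using subset_Ico_of_mem_nodeIntervals h
  have hIco {I : Finset ℕ} (hI : I ∈ iparts c 0 + iparts c' 0) :
      ∃ i j, i < j ∧ I = Finset.Ico i j := by
    rcases Multiset.mem_add.mp hI with h | h <;>
    · obtain ⟨i, j, rfl, -, hij, -⟩ := mem_iparts h
      exact ⟨i, j, by omega, rfl⟩
  have hinj : Set.InjOn (widenAt a (size u)) {I | I ∈ iparts c 0 + iparts c' 0} := by
    intro I hI J hJ hIJ
    obtain ⟨i, j, hij, rfl⟩ := hIco hI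
    obtain ⟨i', j', hij', rfl⟩ := hIco hJ
    exact Ico_eq_of_widenAt_eq hij hij' hIJ
  rw [commonEdges, iparts_graft hc ha, iparts_graft hc' ha', zero_add, hsize,
    Multiset.add_inter_add_of_separated (fun I => ¬ I ⊆ w) (fun _ => hnot) (fun _ => hnot)
      (fun _ => hsub rfl) (fun _ => hsub hsize),
    ← Multiset.map_inter_of_injOn hinj, Multiset.card_add, Multiset.card_map, commonEdges]

theorem dR_add_two_mul_commonEdges_le {S T : BT} (h : size S = size T) (hS : isNode S = true) :
    dR S T + 2 * commonEdges S T + 2 ≤ 2 * size S := by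
  induction hn : size S using Nat.strong_induction_on generalizing S T with
  | _ n ih =>
  rcases Multiset.empty_or_exists_mem (iparts S 0 ∩ iparts T 0) with h0 | ⟨J, hJ⟩
  · obtain ⟨k, hk, hc⟩ := exists_chain_of_size_eq h
    have := dR_le hc
    have := isNode_iff.mp hS
    rw [commonEdges, h0, Multiset.card_zero]
    omega
  · obtain ⟨hJS, hJT⟩ := Multiset.mem_inter.mp hJ
    obtain ⟨a, b, rfl, -⟩ := mem_iparts hJS
    obtain ⟨c, u, hc, hu, ha, hnu, rfl⟩ := exists_graft_of_Ico_mem_iparts hJS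
    obtain ⟨c', u', hc', hu', ha', hnu', rfl⟩ := exists_graft_of_Ico_mem_iparts hJT
    rw [Nat.sub_zero] at ha ha' ⊢
    have hsu : size u' = size u := by simp only [nl] at hnu hnu'; omega
    rw [size_graft, size_graft] at h
    rw [size_graft] at hn
    have hsc : size c' = size c := by omega
    have := isNode_iff.mp hu
    have := isNode_iff.mp hc
    have ihu := ih (size u) (by omega) hsu.symm hu rfl
    have ihc := ih (size c) (by omega) hsc.symm hc rfl
    have := dR_le (((chain_dR_of_size_eq hsu.symm).graft_inner c a).trans
      ((chain_dR_of_size_eq hsc.symm).graft_outer a u'))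
    rw [commonEdges_graft hc hc' ha ha' hsu,
      card_nodeIntervals_inter hu hu' (by simp only [nl, hsu])]
    omega

theorem dR_two_approximation (n e : ℕ) (S T : BT)
    (hS : S.size = n) (hT : T.size = n) (he : commonEdges S T = e) :
    n - e - 1 ≤ dR S T ∧ dR S T ≤ 2 * (n - e - 1) ∧ 2 * (n - e - 1) ≤ 2 * dR S T := by
  subst hS he
  have hlower := sub_commonEdges_le_dR hT.symm
  rcases isNode_or_eq_leaf S with hnode | rfl
  · have hupper := dR_add_two_mul_commonEdges_le hT.symm hnode
    omega
  · obtain rfl := eq_leaf_of_size_eq_zero hT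
    have := dR_le (Chain.refl leaf)
    omega

end BT
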